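/- Fix an integer p ≥ 2 and let A_p(t) = S_p(t) + S̃_p(t) be the rational function from the Appendix. Then for every real t such that t, t−1 and t−2 all avoid the excluded set {2p−1, …, 3p−2} ∪ {−p, …, −1}, one has the second-order recursion (t+p)(t+1−2p)² · A_p(t) = (t−1)²(3p−t) · A_p(t−2) + 2(t−p)(t² − 2pt + 2p − 2p²) · A_p(t−1). -/

import Mathlib

/-- `c_i = (−1)^{p−i} (i!)² / ( ((i−2p+1)!)² (p+i)! (3p−i−2)! )`. -/
noncomputable def cc (p i : ℕ) : ℝ :=
  (-1 : ℝ) ^ ((p : ℤ) - (i : ℤ)) * (Nat.factorial i : ℝ)^2 /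
    ((Nat.factorial (i + 1 - 2*p) : ℝ)^2 * (Nat.factorial (p + i) : ℝ) *
      (Nat.factorial (3*p - 2 - i) : ℝ))

/-- `S_p(t) = Σ_{i=2p−1}^{3p−2} c_i/(t−i)`. -/
noncomputable def Sp (p : ℕ) (t : ℝ) : ℝ :=
  ∑ i ∈ Finset.Icc (2*p - 1) (3*p - 2), cc p i / (t - i)

/-- `S̃_p(t) = −Σ_{i=2p−1}^{3p−2} c_i/(t+i−2p+2)`. -/
noncomputable def Sp' (p : ℕ) (t : ℝ) : ℝ :=
  - ∑ i ∈ Finset.Icc (2*p - 1) (3*p - 2), cc p i / (t + i - 2*p + 2)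

/-- `A_p(t) = S_p(t) + S̃_p(t)`. -/
noncomputable def Ap (p : ℕ) (t : ℝ) : ℝ := Sp p t + Sp' p t

/-- `t` lies in the excluded set `{2p−1, …, 3p−2} ∪ {−p, …, −1}`. -/
def excluded (p : ℕ) (t : ℝ) : Prop :=
  ∃ k : ℤ, ((2*(p : ℤ) - 1 ≤ k ∧ k ≤ 3*(p : ℤ) - 2) ∨ (-(p : ℤ) ≤ k ∧ k ≤ -1)) ∧
    t = (k : ℝ)

private lemma factR_ne (n : ℕ) : (Nat.factorial n : ℝ) ≠ 0 := by
  exact_mod_cast (Nat.factorial_pos n).ne'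

set_option maxHeartbeats 1000000 in
lemma ccstep (p i : ℕ) (hp : 2 ≤ p) (h1 : 2*p - 1 ≤ i) (h2 : i ≤ 3*p - 3) :
    ((i:ℝ) - 2*(p:ℝ) + 2)^2 * ((p:ℝ) + (i:ℝ) + 1) * cc p (i+1)
      = -(((i:ℝ)+1)^2 * (3*(p:ℝ) - 2 - (i:ℝ))) * cc p i := by
  have hip : 2*p ≤ i + 1 := by omega
  have f1 : ((i+1).factorial : ℝ) = ((i:ℝ)+1) * (i.factorial : ℝ) := by
    rw [Nat.factorial_succ]; push_cast; ring
  have f2 : ((i + 1 + 1 - 2*p).factorial : ℝ)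
      = ((i:ℝ) + 2 - 2*(p:ℝ)) * ((i + 1 - 2*p).factorial : ℝ) := by
    rw [show i + 1 + 1 - 2*p = (i + 1 - 2*p) + 1 by omega, Nat.factorial_succ, Nat.cast_mul,
      Nat.cast_add, Nat.cast_sub hip]
    push_cast; ring
  have f3 : ((p + (i+1)).factorial : ℝ) = ((p:ℝ) + (i:ℝ) + 1) * ((p + i).factorial : ℝ) := by
    rw [show p + (i+1) = (p + i) + 1 by omega, Nat.factorial_succ]; push_cast; ring
  have f4 : ((3*p - 2 - i).factorial : ℝ)
      = (3*(p:ℝ) - 2 - (i:ℝ)) * ((3*p - 2 - (i+1)).factorial : ℝ) := by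
    rw [show 3*p - 2 - i = (3*p - 2 - (i+1)) + 1 by omega, Nat.factorial_succ, Nat.cast_mul,
      Nat.cast_add, Nat.cast_sub (show i+1 ≤ 3*p - 2 by omega), Nat.cast_sub (show 2 ≤ 3*p by omega)]
    push_cast; ring
  have esign : (-1:ℝ) ^ ((p:ℤ) - ((i+1:ℕ) : ℤ)) = -((-1:ℝ) ^ ((p:ℤ) - (i:ℤ))) := by
    rw [show (p:ℤ) - ((i+1:ℕ) : ℤ) = ((p:ℤ) - (i:ℤ)) - 1 by push_cast; ring,
      zpow_sub₀ (by norm_num : (-1:ℝ) ≠ 0), zpow_one]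
    rw [div_neg, div_one]
  rw [cc, cc, f1, f2, f3, f4, esign]
  have n1 := factR_ne (i + 1 - 2*p)
  have n2 := factR_ne (p + i)
  have n3 := factR_ne (3*p - 2 - (i+1))
  have n4 := factR_ne i
  have hc1 : (2*(p:ℝ)) ≤ (i:ℝ) + 1 := by exact_mod_cast hip
  have hc2 : (i:ℝ) + 3 ≤ 3*(p:ℝ) := by exact_mod_cast (show i + 3 ≤ 3*p by omega)
  have m1 : (i:ℝ) + 2 - 2*(p:ℝ) ≠ 0 := ne_of_gt (by linarith)
  have m2 : (p:ℝ) + (i:ℝ) + 1 ≠ 0 := by positivity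
  have m3 : 3*(p:ℝ) - 2 - (i:ℝ) ≠ 0 := ne_of_gt (by linarith)
  have m3' : (3*(p:ℝ) - 2 - (i:ℝ))⁻¹ * (3*(p:ℝ) - 2 - (i:ℝ)) = 1 := inv_mul_cancel₀ m3
  field_simp
  linear_combination (-1:ℝ) * (-4 - (i:ℝ) * 4 + (i:ℝ) * p * 4 - (i:ℝ) ^ 2 + (p:ℝ) * 8 - (p:ℝ) ^ 2 * 4) * m3'

/-- Extended coefficients: `cc` on the support interval, `0` outside. -/
noncomputable def G (p j : ℕ) : ℝ :=
  if 2*p - 1 ≤ j ∧ j ≤ 3*p - 2 then cc p j else 0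

lemma G_eq (p j : ℕ) (h : 2*p - 1 ≤ j ∧ j ≤ 3*p - 2) : G p j = cc p j := if_pos h

lemma G_zero (p j : ℕ) (h : ¬ (2*p - 1 ≤ j ∧ j ≤ 3*p - 2)) : G p j = 0 := if_neg h

/-- Coefficient polynomials. -/
noncomputable def KA (p : ℕ) (x : ℝ) : ℝ := (x + p) * (x + 1 - 2*(p:ℝ))^2
noncomputable def KB (p : ℕ) (x : ℝ) : ℝ := (x - 1)^2 * (3*(p:ℝ) - x)
noncomputable def KD (p : ℕ) (x : ℝ) : ℝ :=
  2 * (x - p) * (x^2 - 2*(p:ℝ)*x + 2*(p:ℝ) - 2*(p:ℝ)^2)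

set_option maxHeartbeats 1000000 in
/-- The key three-term recurrence for the extended coefficients. -/
lemma recn (p j : ℕ) (hp : 2 ≤ p) (hj : 2*p - 1 ≤ j) :
    KA p (j:ℝ) * G p j = KB p (j:ℝ) * G p (j-2) + KD p (j:ℝ) * G p (j-1) := by
  have cast1 : ∀ m n : ℕ, n ≤ m → ((m - n : ℕ) : ℝ) = (m:ℝ) - (n:ℝ) := by
    intro m n h; rw [Nat.cast_sub h]
  rcases (show j = 2*p-1 ∨ j = 2*p ∨ (2*p+1 ≤ j ∧ j ≤ 3*p-2) ∨ j = 3*p-1 ∨ j = 3*p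
      ∨ 3*p+1 ≤ j by omega) with h | h | h | h | h | h
  · subst h
    rw [G_zero p (2*p-1-2) (by omega), G_zero p (2*p-1-1) (by omega),
      G_eq p (2*p-1) (by omega)]
    have c1 : ((2*p-1 : ℕ) : ℝ) = 2*(p:ℝ) - 1 := by rw [cast1 _ _ (by omega)]; push_cast; ring
    rw [c1, KA, KB, KD]; ring
  · subst h
    have rel := ccstep p (2*p-1) hp (by omega) (by omega)
    rw [show 2*p-1+1 = 2*p by omega] at rel
    have c1 : ((2*p-1 : ℕ) : ℝ) = 2*(p:ℝ) - 1 := by rw [cast1 _ _ (by omega)]; push_cast; ring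
    rw [c1] at rel
    rw [G_zero p (2*p-2) (by omega), G_eq p (2*p-1) (by omega),
      G_eq p (2*p) (by omega)]
    rw [KA, KB, KD]
    push_cast
    linear_combination rel
  · obtain ⟨hl, hr⟩ := h
    have rel1 := ccstep p (j-1) hp (by omega) (by omega)
    have rel2 := ccstep p (j-2) hp (by omega) (by omega)
    rw [show j-1+1 = j by omega] at rel1
    rw [show j-2+1 = j-1 by omega] at rel2
    have c1 : ((j-1 : ℕ) : ℝ) = (j:ℝ) - 1 := by rw [cast1 _ _ (by omega)]; push_cast; ring
    have c2 : ((j-2 : ℕ) : ℝ) = (j:ℝ) - 2 := by rw [cast1 _ _ (by omega)]; push_cast; ring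
    rw [c1] at rel1
    rw [c2] at rel2
    rw [G_eq p j (by omega), G_eq p (j-1) (by omega), G_eq p (j-2) (by omega)]
    rw [KA, KB, KD]
    linear_combination rel1 - rel2
  · subst h
    have rel2 := ccstep p (3*p-3) hp (by omega) (by omega)
    rw [show 3*p-3+1 = 3*p-2 by omega] at rel2
    have c2 : ((3*p-3 : ℕ) : ℝ) = 3*(p:ℝ) - 3 := by rw [cast1 _ _ (by omega)]; push_cast; ring
    rw [c2] at rel2
    have c1 : ((3*p-1 : ℕ) : ℝ) = 3*(p:ℝ) - 1 := by rw [cast1 _ _ (by omega)]; push_cast; ring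
    rw [G_zero p (3*p-1) (by omega), G_eq p (3*p-1-2) (by omega), G_eq p (3*p-1-1) (by omega),
      show 3*p-1-2 = 3*p-3 by omega, show 3*p-1-1 = 3*p-2 by omega, c1, KA, KB, KD]
    linear_combination -rel2
  · subst h
    have c1 : ((3*p : ℕ) : ℝ) = 3*(p:ℝ) := by push_cast; ring
    rw [G_zero p (3*p) (by omega), G_zero p (3*p-1) (by omega), G_eq p (3*p-2) (by omega),
      show 3*p-2*1 = 3*p-2 by omega]
    rw [c1, KA, KB, KD]; ring
  · rw [G_zero p j (by omega), G_zero p (j-2) (by omega), G_zero p (j-1) (by omega)]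
    ring

noncomputable def HH (p : ℕ) (t x : ℝ) : ℝ := 1/(t - x) + 1/(t - (2*(p:ℝ) - x))

set_option maxRecDepth 100000 in
set_option maxHeartbeats 2000000 in
lemma point (p : ℕ) (α t : ℝ) (h1 : t ≠ α) (h2 : t ≠ α + 1) (h3 : t ≠ α + 2)
    (h4 : t ≠ 2*(p:ℝ) - 2 - α) (h5 : t ≠ 2*(p:ℝ) - 1 - α) (h6 : t ≠ 2*(p:ℝ) - α) :
    KA p t * (1/(t - α) - 1/(t + α - 2*(p:ℝ) + 2))
      - KB p t * (1/(t - 2 - α) - 1/(t - 2 + α - 2*(p:ℝ) + 2))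
      - KD p t * (1/(t - 1 - α) - 1/(t - 1 + α - 2*(p:ℝ) + 2))
    = KA p α * HH p t α - KB p (α+2) * HH p t (α+2) - KD p (α+1) * HH p t (α+1) := by
  have dA : t - α ≠ 0 := sub_ne_zero.mpr h1
  have dB : t + α - 2*(p:ℝ) + 2 ≠ 0 := fun h => h4 (by linarith)
  have dB' : t + α - 2*(p:ℝ) + 2 ≠ 0 := dB
  have dC : t - 2 - α ≠ 0 := fun h => h3 (by linarith)
  have dD : t - 2 + α - 2*(p:ℝ) + 2 ≠ 0 := fun h => h6 (by linarith)
  have dE : t - 1 - α ≠ 0 := fun h => h2 (by linarith)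
  have dF : t - 1 + α - 2*(p:ℝ) + 2 ≠ 0 := fun h => h5 (by linarith)
  have dG : t - (2*(p:ℝ) - α) ≠ 0 := sub_ne_zero.mpr h6
  have dH : t - (α + 2) ≠ 0 := sub_ne_zero.mpr h3
  have dI : t - (2*(p:ℝ) - (α + 2)) ≠ 0 := fun h => h4 (by linarith)
  have dJ : t - (α + 1) ≠ 0 := sub_ne_zero.mpr h2
  have dK : t - (2*(p:ℝ) - (α + 1)) ≠ 0 := fun h => h5 (by linarith)
  have eB : t + α - (p:ℝ)*2 + 2 ≠ 0 := fun h => h4 (by linarith)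
  have eG : t - ((p:ℝ)*2 - α) ≠ 0 := fun h => h6 (by linarith)
  have eI : t - ((p:ℝ)*2 - (α + 2)) ≠ 0 := fun h => h4 (by linarith)
  have eK : t - ((p:ℝ)*2 - (α + 1)) ≠ 0 := fun h => h5 (by linarith)
  have eD : t - 2 + α - (p:ℝ)*2 + 2 ≠ 0 := fun h => h6 (by linarith)
  have eF : t - 1 + α - (p:ℝ)*2 + 2 ≠ 0 := fun h => h5 (by linarith)
  rw [KA, KA, KB, KB, KD, KD, HH, HH, HH]
  field_simp
  ring

set_option maxHeartbeats 2000000 in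
theorem stmt_13 (p : ℕ) (hp : 2 ≤ p) (t : ℝ)
    (ht : ¬ excluded p t) (ht1 : ¬ excluded p (t - 1)) (ht2 : ¬ excluded p (t - 2)) :
    (t + p) * (t + 1 - 2*(p : ℝ))^2 * Ap p t =
      (t - 1)^2 * (3*(p : ℝ) - t) * Ap p (t - 2) +
        2 * (t - p) * (t^2 - 2*(p : ℝ)*t + 2*(p : ℝ) - 2*(p : ℝ)^2) * Ap p (t - 1) := by
  classical
  have hne : ∀ (s : ℝ), ¬ excluded p s → ∀ k : ℤ,
      ((2*(p:ℤ) - 1 ≤ k ∧ k ≤ 3*(p:ℤ) - 2) ∨ (-(p:ℤ) ≤ k ∧ k ≤ -1)) → s ≠ (k:ℝ) :=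
    fun s hs k hk he => hs ⟨k, hk, he⟩
  have expand : ∀ s : ℝ, Ap p s
      = ∑ i ∈ Finset.Icc (2*p-1) (3*p-2),
          cc p i * (1/(s - (i:ℝ)) - 1/(s + (i:ℝ) - 2*(p:ℝ) + 2)) := by
    intro s
    rw [Ap, Sp, Sp', ← sub_eq_add_neg, ← Finset.sum_sub_distrib]
    exact Finset.sum_congr rfl fun i _ => by ring
  have expandA : KA p t * Ap p t - KB p t * Ap p (t-2) - KD p t * Ap p (t-1)
      = ∑ i ∈ Finset.Icc (2*p-1) (3*p-2),
          cc p i * (KA p t * (1/(t - (i:ℝ)) - 1/(t + (i:ℝ) - 2*(p:ℝ) + 2))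
            - KB p t * (1/(t - 2 - (i:ℝ)) - 1/(t - 2 + (i:ℝ) - 2*(p:ℝ) + 2))
            - KD p t * (1/(t - 1 - (i:ℝ)) - 1/(t - 1 + (i:ℝ) - 2*(p:ℝ) + 2))) := by
    rw [expand t, expand (t-2), expand (t-1), Finset.mul_sum, Finset.mul_sum, Finset.mul_sum,
      ← Finset.sum_sub_distrib, ← Finset.sum_sub_distrib]
    exact Finset.sum_congr rfl fun i _ => by ring
  have s1 : ∀ i ∈ Finset.Icc (2*p-1) (3*p-2),
      cc p i * (KA p t * (1/(t - (i:ℝ)) - 1/(t + (i:ℝ) - 2*(p:ℝ) + 2))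
            - KB p t * (1/(t - 2 - (i:ℝ)) - 1/(t - 2 + (i:ℝ) - 2*(p:ℝ) + 2))
            - KD p t * (1/(t - 1 - (i:ℝ)) - 1/(t - 1 + (i:ℝ) - 2*(p:ℝ) + 2)))
      = G p i * (KA p (i:ℝ) * HH p t (i:ℝ))
          - G p i * (KB p ((i:ℝ)+2) * HH p t ((i:ℝ)+2))
          - G p i * (KD p ((i:ℝ)+1) * HH p t ((i:ℝ)+1)) := by
    intro i hi
    rw [Finset.mem_Icc] at hi
    obtain ⟨hi1, hi2⟩ := hi
    have h1 : t ≠ (i:ℝ) := by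
      have h := hne t ht (i:ℤ) (Or.inl (by omega)); exact_mod_cast h
    have h2 : t ≠ (i:ℝ) + 1 := by
      have h := hne (t-1) ht1 (i:ℤ) (Or.inl (by omega)); push_cast at h
      intro heq; exact h (by linarith)
    have h3 : t ≠ (i:ℝ) + 2 := by
      have h := hne (t-2) ht2 (i:ℤ) (Or.inl (by omega)); push_cast at h
      intro heq; exact h (by linarith)
    have h4 : t ≠ 2*(p:ℝ) - 2 - (i:ℝ) := by
      have h := hne t ht (2*(p:ℤ) - 2 - (i:ℤ)) (Or.inr (by omega)); push_cast at h
      intro heq; exact h (by linarith)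
    have h5 : t ≠ 2*(p:ℝ) - 1 - (i:ℝ) := by
      have h := hne (t-1) ht1 (2*(p:ℤ) - 2 - (i:ℤ)) (Or.inr (by omega)); push_cast at h
      intro heq; exact h (by linarith)
    have h6 : t ≠ 2*(p:ℝ) - (i:ℝ) := by
      have h := hne (t-2) ht2 (2*(p:ℤ) - 2 - (i:ℤ)) (Or.inr (by omega)); push_cast at h
      intro heq; exact h (by linarith)
    rw [G_eq p i ⟨hi1, hi2⟩]
    linear_combination (cc p i) * point p (i:ℝ) t h1 h2 h3 h4 h5 h6
  have key : (∑ i ∈ Finset.Icc (2*p-1) (3*p-2),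
      cc p i * (KA p t * (1/(t - (i:ℝ)) - 1/(t + (i:ℝ) - 2*(p:ℝ) + 2))
            - KB p t * (1/(t - 2 - (i:ℝ)) - 1/(t - 2 + (i:ℝ) - 2*(p:ℝ) + 2))
            - KD p t * (1/(t - 1 - (i:ℝ)) - 1/(t - 1 + (i:ℝ) - 2*(p:ℝ) + 2)))) = 0 := by
    rw [Finset.sum_congr rfl s1, Finset.sum_sub_distrib, Finset.sum_sub_distrib]
    have hA : ∑ i ∈ Finset.Icc (2*p-1) (3*p-2), G p i * (KA p (i:ℝ) * HH p t (i:ℝ))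
        = ∑ j ∈ Finset.Icc (2*p-1) (3*p), G p j * (KA p (j:ℝ) * HH p t (j:ℝ)) := by
      refine Finset.sum_subset (by intro x hx; rw [Finset.mem_Icc] at *; omega) ?_
      intro j hj hnj
      rw [Finset.mem_Icc] at hj
      rw [G_zero p j (by intro hc; exact hnj (by rw [Finset.mem_Icc]; omega)), zero_mul]
    have hB : ∑ i ∈ Finset.Icc (2*p-1) (3*p-2), G p i * (KB p ((i:ℝ)+2) * HH p t ((i:ℝ)+2))
        = ∑ j ∈ Finset.Icc (2*p-1) (3*p), G p (j-2) * (KB p (j:ℝ) * HH p t (j:ℝ)) := by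
      have hvan : ∀ j ∈ (↑(Finset.Icc (2*p-1) (3*p)) : Set ℕ),
          j ∉ (fun i => i + 2) '' ↑(Finset.Icc (2*p-1) (3*p-2)) →
          G p (j-2) * (KB p (j:ℝ) * HH p t (j:ℝ)) = 0 := by
        intro j hj hnj
        simp only [Finset.coe_Icc, Set.mem_Icc] at hj
        have hle : j ≤ 2*p := by
          by_contra hc
          have hw1 : j - 2 ∈ (↑(Finset.Icc (2*p-1) (3*p-2)) : Set ℕ) := by
            simp only [Finset.coe_Icc, Set.mem_Icc]; omega
          have hw2 : (fun i => i + 2) (j - 2) = j := by simp only []; omega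
          exact hnj ⟨j - 2, hw1, hw2⟩
        have hgz : ¬(2*p - 1 ≤ j - 2 ∧ j - 2 ≤ 3*p - 2) := by omega
        rw [G_zero p (j-2) hgz, zero_mul]
      refine Finset.sum_of_injOn (fun i => i + 2) (fun a _ b _ h => by simp only [] at h; omega)
        (fun i hi => by simp only [Finset.coe_Icc, Set.mem_Icc] at *; omega) hvan ?_
      intro i hi
      rw [Finset.mem_Icc] at hi
      rw [Nat.add_sub_cancel]
      push_cast
      ring
    have hD : ∑ i ∈ Finset.Icc (2*p-1) (3*p-2), G p i * (KD p ((i:ℝ)+1) * HH p t ((i:ℝ)+1))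
        = ∑ j ∈ Finset.Icc (2*p-1) (3*p), G p (j-1) * (KD p (j:ℝ) * HH p t (j:ℝ)) := by
      have hvan : ∀ j ∈ (↑(Finset.Icc (2*p-1) (3*p)) : Set ℕ),
          j ∉ (fun i => i + 1) '' ↑(Finset.Icc (2*p-1) (3*p-2)) →
          G p (j-1) * (KD p (j:ℝ) * HH p t (j:ℝ)) = 0 := by
        intro j hj hnj
        simp only [Finset.coe_Icc, Set.mem_Icc] at hj
        have hle : j ≤ 2*p - 1 ∨ j = 3*p := by
          by_contra hc
          push_neg at hc
          have hw1 : j - 1 ∈ (↑(Finset.Icc (2*p-1) (3*p-2)) : Set ℕ) := by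
            simp only [Finset.coe_Icc, Set.mem_Icc]; omega
          have hw2 : (fun i => i + 1) (j - 1) = j := by simp only []; omega
          exact hnj ⟨j - 1, hw1, hw2⟩
        have hgz : ¬(2*p - 1 ≤ j - 1 ∧ j - 1 ≤ 3*p - 2) := by omega
        rw [G_zero p (j-1) hgz, zero_mul]
      refine Finset.sum_of_injOn (fun i => i + 1) (fun a _ b _ h => by simp only [] at h; omega)
        (fun i hi => by simp only [Finset.coe_Icc, Set.mem_Icc] at *; omega) hvan ?_
      intro i hi
      rw [Finset.mem_Icc] at hi
      rw [Nat.add_sub_cancel]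
      push_cast
      ring
    rw [hA, hB, hD, ← Finset.sum_sub_distrib, ← Finset.sum_sub_distrib]
    refine Finset.sum_eq_zero fun j hj => ?_
    rw [Finset.mem_Icc] at hj
    linear_combination (HH p t (j:ℝ)) * recn p j hp hj.1
  have final : KA p t * Ap p t - KB p t * Ap p (t-2) - KD p t * Ap p (t-1) = 0 :=
    expandA.trans key
  rw [KA, KB, KD] at final
  linear_combination final
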